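/- Let L ∈ ℝ^{n×n} satisfy L·1 = 0. If −L is marginally stable with dim ker L = 1 (equivalently, 0 is a simple eigenvalue of L and every other eigenvalue has strictly positive real part), then for every d > max over nonzero eigenvalues λ of |λ|²/(2 Re λ), the matrix B = dI − L has spectral radius ρ(B) = d, which is a simple strictly dominant eigenvalue with positive right eigenvector 1. -/

import Mathlib

open Matrix Filter Polynomial Topology

noncomputable section

/-- Complexification of a real matrix. -/
def cmat {n : ℕ} (A : Matrix (Fin n) (Fin n) ℝ) : Matrix (Fin n) (Fin n) ℂ :=
  A.map (algebraMap ℝ ℂ)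

/-- `A` is eventually positive: all sufficiently large powers are entrywise positive. -/
def EvPos {n : ℕ} (A : Matrix (Fin n) (Fin n) ℝ) : Prop :=
  ∃ t0 : ℕ, ∀ t ≥ t0, ∀ i j, 0 < (A ^ t) i j

/-- `A` is eventually exponentially positive: `e^{At}` is entrywise positive for all large `t`. -/
def EvExpPos {n : ℕ} (A : Matrix (Fin n) (Fin n) ℝ) : Prop :=
  ∃ t0 : ℝ, 0 ≤ t0 ∧ ∀ t ≥ t0, ∀ i j, 0 < (NormedSpace.exp (t • A)) i j

/-- Spectral radius of a real matrix, via its complex spectrum. -/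
def specRad {n : ℕ} (A : Matrix (Fin n) (Fin n) ℝ) : ℝ :=
  sSup ((‖·‖) '' spectrum ℂ (cmat A))

/-- `μ` is a simple eigenvalue of `A`: it has multiplicity one as a root of the
characteristic polynomial. -/
def SimpleEig {n : ℕ} (A : Matrix (Fin n) (Fin n) ℝ) (μ : ℂ) : Prop :=
  (Matrix.charpoly (cmat A)).roots.count μ = 1

/-- Marginal (continuous-time) stability: every eigenvalue has nonpositive real part, and
eigenvalues on the imaginary axis are simple roots of the minimal polynomial. -/
def MarginallyStable {n : ℕ} (A : Matrix (Fin n) (Fin n) ℝ) : Prop :=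
  ∀ μ ∈ spectrum ℂ (cmat A), μ.re ≤ 0 ∧
    (μ.re = 0 → Polynomial.rootMultiplicity μ (minpoly ℂ (cmat A)) = 1)

/-- Marginal Schur stability: every eigenvalue has modulus at most one, and eigenvalues of
modulus one are simple roots of the minimal polynomial. -/
def MarginallySchurStable {n : ℕ} (A : Matrix (Fin n) (Fin n) ℝ) : Prop :=
  ∀ μ ∈ spectrum ℂ (cmat A), ‖μ‖ ≤ 1 ∧
    (‖μ‖ = 1 → Polynomial.rootMultiplicity μ (minpoly ℂ (cmat A)) = 1)

/-- Irreducibility: no nontrivial proper index subset `S` with `A i j = 0` for all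
`i ∈ S`, `j ∉ S` (equivalently, no permutation puts `A` in block triangular form). -/
def MatIrreducible {n : ℕ} (A : Matrix (Fin n) (Fin n) ℝ) : Prop :=
  ¬ ∃ S : Finset (Fin n), S.Nonempty ∧ S ≠ Finset.univ ∧ ∀ i ∈ S, ∀ j ∉ S, A i j = 0

/-- The all-ones vector. -/
def ones (n : ℕ) : Fin n → ℝ := fun _ => 1

/-!
The characteristic polynomial of `d • 1 - L` is `±χ_L(d - X)`, so its spectrum is `d - σ(L)` and
`d` is a root of the same multiplicity as `0` is for `χ_L`. For `λ ∈ σ(L) \ {0}` one has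
`|d - λ|² = d² - 2 d Re λ + |λ|²`, which is `< d²` exactly when `d > |λ|² / (2 Re λ)`; this is the
strict dominance, and it makes `d` the spectral radius.
-/

theorem spectrum.mem_algebraMap_sub_iff {R A : Type*} [CommRing R] [Ring A] [Algebra R A]
    (a : A) (c μ : R) : μ ∈ spectrum R (algebraMap R A c - a) ↔ c - μ ∈ spectrum R a := by
  rw [spectrum.mem_iff, spectrum.mem_iff, ← IsUnit.neg_iff, map_sub]
  congr! 2
  abel

namespace Matrix

variable {n R : Type*} [Fintype n] [DecidableEq n] [CommRing R]

theorem charpoly_algebraMap_sub (M : Matrix n n R) (c : R) :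
    (algebraMap R (Matrix n n R) c - M).charpoly
      = (-1) ^ Fintype.card n * M.charpoly.comp (C c - X) := by
  have hcomp :
      M.charpoly.comp (C c - X) = (-charmatrix (algebraMap R (Matrix n n R) c - M)).det := by
    change eval₂RingHom C (C c - X) (charmatrix M).det = _
    rw [RingHom.map_det]
    congr 1
    ext i j : 1
    by_cases h : i = j
    · subst h
      simp [charmatrix_apply_eq, algebraMap_matrix_apply, sub_right_comm]
    · simp [h, algebraMap_matrix_apply]
  rw [hcomp, det_neg, ← mul_assoc, ← pow_add, Even.neg_one_pow ⟨_, rfl⟩, one_mul, charpoly]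

theorem count_roots_charpoly_algebraMap_sub [IsDomain R] [DecidableEq R] (M : Matrix n n R)
    (c x : R) :
    (algebraMap R (Matrix n n R) c - M).charpoly.roots.count x
      = M.charpoly.roots.count (c - x) := by
  have hroots : (algebraMap R (Matrix n n R) c - M).charpoly.roots
      = (M.charpoly.comp (C (-1) * X + C c)).roots := by
    rw [charpoly_algebraMap_sub]
    rcases neg_one_pow_eq_or R[X] (Fintype.card n) with h | h <;> simp [h, sub_eq_neg_add]
  rw [hroots, count_roots, count_roots,
    rootMultiplicity_comp_C_mul_X_add_C _ _ _ _ isUnit_neg_one, neg_one_mul, neg_add_eq_sub]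

end Matrix

theorem Complex.norm_ofReal_sub_lt {z : ℂ} {d : ℝ} (hz : 0 < z.re)
    (h : ‖z‖ ^ 2 / (2 * z.re) < d) : ‖(d : ℂ) - z‖ < d := by
  rw [div_lt_iff₀ (by positivity)] at h
  have hd : 0 < d := by nlinarith [norm_nonneg z]
  have hsq : ‖(d : ℂ) - z‖ ^ 2 = d ^ 2 - 2 * d * z.re + ‖z‖ ^ 2 := by
    simp only [Complex.sq_norm, Complex.normSq_apply, Complex.sub_re, Complex.sub_im,
      Complex.ofReal_re, Complex.ofReal_im]
    ring
  exact (pow_lt_pow_iff_left₀ (norm_nonneg _) hd.le two_ne_zero).1 (by nlinarith)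

theorem cmat_smul_one_sub {n : ℕ} (A : Matrix (Fin n) (Fin n) ℝ) (d : ℝ) :
    cmat (d • (1 : Matrix (Fin n) (Fin n) ℝ) - A)
      = algebraMap ℂ (Matrix (Fin n) (Fin n) ℂ) d - cmat A := by
  ext i j
  by_cases h : i = j <;> simp [cmat, h, algebraMap_matrix_apply]

theorem specRad_eq_of_dominant {n : ℕ} {A : Matrix (Fin n) (Fin n) ℝ} {r : ℝ} (hr : 0 ≤ r)
    (hmem : (r : ℂ) ∈ spectrum ℂ (cmat A))
    (hdom : ∀ μ ∈ spectrum ℂ (cmat A), μ ≠ r → ‖μ‖ < r) : specRad A = r := by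
  refine IsGreatest.csSup_eq ⟨⟨r, hmem, by simp [hr]⟩, ?_⟩
  rintro _ ⟨μ, hμ, rfl⟩
  rcases eq_or_ne μ r with rfl | hne
  · simp [abs_of_nonneg hr]
  · exact (hdom μ hμ hne).le

/-- If `0` is a simple eigenvalue of `L` and all other eigenvalues have positive real part,
then for every `d > max_{λ ≠ 0} |λ|²/(2 Re λ)` the matrix `B = dI - L` has spectral radius
`d`, which is a simple strictly dominant eigenvalue with positive right eigenvector `1`. -/
theorem stmt6 {n : ℕ} (L : Matrix (Fin n) (Fin n) ℝ) (hL : L *ᵥ ones n = 0)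
    (h0 : SimpleEig L 0)
    (hpos : ∀ μ ∈ spectrum ℂ (cmat L), μ ≠ 0 → 0 < μ.re)
    (d : ℝ) (hd0 : 0 < d)
    (hd : ∀ μ ∈ spectrum ℂ (cmat L), μ ≠ 0 → ‖μ‖ ^ 2 / (2 * μ.re) < d) :
    specRad (d • (1 : Matrix (Fin n) (Fin n) ℝ) - L) = d ∧
      SimpleEig (d • (1 : Matrix (Fin n) (Fin n) ℝ) - L) (d : ℂ) ∧
      (∀ μ ∈ spectrum ℂ (cmat (d • (1 : Matrix (Fin n) (Fin n) ℝ) - L)),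
        μ ≠ (d : ℂ) → ‖μ‖ < d) ∧
      (d • (1 : Matrix (Fin n) (Fin n) ℝ) - L) *ᵥ ones n = d • ones n := by
  have hB : cmat (d • (1 : Matrix (Fin n) (Fin n) ℝ) - L)
      = algebraMap ℂ (Matrix (Fin n) (Fin n) ℂ) d - cmat L := cmat_smul_one_sub L d
  have hzero : (0 : ℂ) ∈ spectrum ℂ (cmat L) := by
    rw [mem_spectrum_iff_isRoot_charpoly]
    exact (mem_roots'.1 (Multiset.count_pos.1 (h0.symm ▸ one_pos))).2
  have hdom : ∀ μ ∈ spectrum ℂ (cmat (d • (1 : Matrix (Fin n) (Fin n) ℝ) - L)),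
      μ ≠ (d : ℂ) → ‖μ‖ < d := by
    intro μ hμ hne
    rw [hB, spectrum.mem_algebraMap_sub_iff] at hμ
    have hμ0 : (d : ℂ) - μ ≠ 0 := sub_ne_zero.2 hne.symm
    simpa using Complex.norm_ofReal_sub_lt (hpos _ hμ hμ0) (hd _ hμ hμ0)
  have hdmem : (d : ℂ) ∈ spectrum ℂ (cmat (d • (1 : Matrix (Fin n) (Fin n) ℝ) - L)) := by
    rw [hB, spectrum.mem_algebraMap_sub_iff, sub_self]
    exact hzero
  refine ⟨specRad_eq_of_dominant hd0.le hdmem hdom, ?_, hdom, ?_⟩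
  · rw [SimpleEig, hB, count_roots_charpoly_algebraMap_sub, sub_self]
    exact h0
  · rw [sub_mulVec, smul_mulVec, one_mulVec, hL, sub_zero]
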